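/- arXiv:1501.05830 — 2 statements merged into one kernel-verified Lean document; each statement's English description precedes it below -/
import Mathlib

section
/- For all integers n ≥ 1, Fhat_n(q) = b^{ξ(n)} · Σ_{l=0}^{⌊(n-2)/2⌋} qbinom(n-l-2, l) · (ab)^{⌊(n-2)/2⌋ - l} · q^{l²+l}, where ξ(m) = m mod 2. -/
open Finset PowerSeries

variable {R : Type*} [CommRing R]

/-- The Gaussian (q-)binomial coefficient, via the Pascal-type recurrence
`[n+1, k+1] = q^(n-k) [n, k] + [n, k+1]`. -/
def qbinom (q : R) : ℕ → ℕ → R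
  | _, 0 => 1
  | 0, _ + 1 => 0
  | n + 1, k + 1 => qbinom q n k * q ^ (n - k) + qbinom q n (k + 1)

/-- The q-biperiodic Fibonacci sequence. -/
def biF (a b q : R) : ℕ → R
  | 0 => 0
  | 1 => 1
  | n + 2 => (if (n + 2) % 2 = 0 then a else b) * biF a b q (n + 1) + q ^ n * biF a b q n

/-- The auxiliary q-biperiodic Fibonacci sequence (same recurrence, initial values 1, 0). -/
def biFhat (a b q : R) : ℕ → R
  | 0 => 1
  | 1 => 0
  | n + 2 => (if (n + 2) % 2 = 0 then a else b) * biFhat a b q (n + 1) + q ^ n * biFhat a b q n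

/-- The biperiodic Fibonacci sequence. -/
def biT (a b : ℕ) : ℕ → ℕ
  | 0 => 0
  | 1 => 1
  | n + 2 => (if (n + 2) % 2 = 0 then a else b) * biT a b (n + 1) + biT a b n

/-- The Schur polynomials D_n(q). -/
def schurD (q : R) : ℕ → R
  | 0 => 0
  | 1 => 1
  | n + 2 => schurD q (n + 1) + q ^ n * schurD q n

/-- The auxiliary Schur polynomials with initial values 1, 0. -/
def schurDhat (q : R) : ℕ → R
  | 0 => 1
  | 1 => 0
  | n + 2 => schurDhat q (n + 1) + q ^ n * schurDhat q n

/-- The shifted q-biperiodic Fibonacci sequence F^(s)_n(q). -/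
def biFs (a b q : R) (s : ℕ) : ℕ → R
  | 0 => 0
  | 1 => 1
  | n + 2 =>
      (if (n + 2) % 2 = 0 then a ^ ((s + 1) % 2) * b ^ (1 - (s + 1) % 2)
       else a ^ (1 - (s + 1) % 2) * b ^ ((s + 1) % 2)) * biFs a b q s (n + 1)
        + q ^ (n + s) * biFs a b q s n

lemma qbinom_eq_zero (q : R) : ∀ n k, n < k → qbinom q n k = 0 := by
  intro n
  induction n with
  | zero =>
    intro k hk
    cases k with
    | zero => omega
    | succ k => rfl
  | succ n ih =>
    intro k hk
    cases k with
    | zero => omega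
    | succ k =>
      rw [qbinom, ih k (by omega), ih (k+1) (by omega)]
      ring

/-- `Se a b q m = S (2m+2)` in the notation of the paper. -/
def Se (a b q : R) (m : ℕ) : R :=
  ∑ l ∈ Finset.range (m+1), qbinom q (2*m - l) l * (a*b)^(m - l) * q^(l^2+l)

/-- `So a b q m = S (2m+3)`. -/
def So (a b q : R) (m : ℕ) : R :=
  ∑ l ∈ Finset.range (m+1), qbinom q (2*m+1 - l) l * (a*b)^(m - l) * q^(l^2+l)

lemma Se_succ (a b q : R) (m : ℕ) :
    Se a b q (m+1) = a * b * So a b q m + q^(2*m+2) * Se a b q m := by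
  unfold Se So
  rw [Finset.sum_range_succ']
  have h1 : ∀ l ∈ Finset.range (m+1),
      qbinom q (2*(m+1) - (l+1)) (l+1) * (a*b)^(m+1 - (l+1)) * q^((l+1)^2+(l+1))
      = qbinom q (2*m - l) l * (a*b)^(m-l) * q^(l^2+l+(2*m+2))
        + qbinom q (2*m - l) (l+1) * (a*b)^(m-l) * q^(l^2+3*l+2) := by
    intro l hl
    simp only [Finset.mem_range] at hl
    have e1 : 2*(m+1) - (l+1) = (2*m - l) + 1 := by omega
    rw [e1, qbinom]
    have e2 : 2*m - l - l = 2*m - 2*l := by omega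
    have e3 : m + 1 - (l+1) = m - l := by omega
    have e4 : (l+1)^2 + (l+1) = l^2+3*l+2 := by ring
    have e5 : l^2+l+(2*m+2) = (2*m-2*l) + (l^2+3*l+2) := by omega
    rw [e2, e3, e4, e5, pow_add]
    ring
  rw [Finset.sum_congr rfl h1, Finset.sum_add_distrib]
  -- handle RHS
  rw [Finset.mul_sum, Finset.mul_sum]
  have h2 : ∀ l ∈ Finset.range (m+1),
      q^(2*m+2) * (qbinom q (2*m - l) l * (a*b)^(m-l) * q^(l^2+l))
      = qbinom q (2*m - l) l * (a*b)^(m-l) * q^(l^2+l+(2*m+2)) := by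
    intro l hl
    rw [pow_add]
    ring
  rw [Finset.sum_congr rfl h2]
  have h3 : (∑ l ∈ Finset.range (m+1),
      a * b * (qbinom q (2*m+1 - l) l * (a*b)^(m-l) * q^(l^2+l)))
      = (∑ l ∈ Finset.range (m+1),
          qbinom q (2*m - l) (l+1) * (a*b)^(m-l) * q^(l^2+3*l+2))
        + qbinom q (2*(m+1) - 0) 0 * (a*b)^(m+1-0) * q^(0^2+0) := by
    rw [Finset.sum_range_succ']
    have h4 : ∀ l ∈ Finset.range m,
        a * b * (qbinom q (2*m+1 - (l+1)) (l+1) * (a*b)^(m-(l+1)) * q^((l+1)^2+(l+1)))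
        = qbinom q (2*m - l) (l+1) * (a*b)^(m-l) * q^(l^2+3*l+2) := by
      intro l hl
      simp only [Finset.mem_range] at hl
      have e1 : 2*m+1 - (l+1) = 2*m - l := by omega
      have e2 : m - l = (m - (l+1)) + 1 := by omega
      have e3 : (l+1)^2 + (l+1) = l^2+3*l+2 := by ring
      rw [e1, e2, e3, pow_succ]
      ring
    rw [Finset.sum_congr rfl h4, Finset.sum_range_succ]
    have e5 : 2*m - m = m := by omega
    rw [e5, qbinom_eq_zero q m (m+1) (by omega)]
    have e6 : qbinom q (2*m+1 - 0) 0 = 1 := rfl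
    have e7 : qbinom q (2*(m+1) - 0) 0 = 1 := rfl
    rw [e6, e7]
    have e8 : (a*b)^(m+1-0) = a * b * (a*b)^(m-0) := by
      rw [Nat.sub_zero, Nat.sub_zero, pow_succ]; ring
    rw [e8]
    ring
  rw [h3]
  ring

lemma So_succ (a b q : R) (m : ℕ) :
    So a b q (m+1) = Se a b q (m+1) + q^(2*m+3) * So a b q m := by
  unfold Se So
  rw [Finset.sum_range_succ' (n := m+1), Finset.sum_range_succ' (n := m+1)]
  have h1 : ∀ l ∈ Finset.range (m+1),
      qbinom q (2*(m+1)+1 - (l+1)) (l+1) * (a*b)^(m+1 - (l+1)) * q^((l+1)^2+(l+1))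
      = qbinom q (2*m+1 - l) l * (a*b)^(m-l) * q^(l^2+l+(2*m+3))
        + qbinom q (2*m+1 - l) (l+1) * (a*b)^(m-l) * q^(l^2+3*l+2) := by
    intro l hl
    simp only [Finset.mem_range] at hl
    have e1 : 2*(m+1)+1 - (l+1) = (2*m+1 - l) + 1 := by omega
    rw [e1, qbinom]
    have e2 : 2*m+1 - l - l = 2*m+1 - 2*l := by omega
    have e3 : m + 1 - (l+1) = m - l := by omega
    have e4 : (l+1)^2 + (l+1) = l^2+3*l+2 := by ring
    have e5 : l^2+l+(2*m+3) = (2*m+1-2*l) + (l^2+3*l+2) := by omega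
    rw [e2, e3, e4, e5, pow_add]
    ring
  rw [Finset.sum_congr rfl h1, Finset.sum_add_distrib]
  have h2 : ∀ l ∈ Finset.range (m+1),
      qbinom q (2*(m+1) - (l+1)) (l+1) * (a*b)^(m+1 - (l+1)) * q^((l+1)^2+(l+1))
      = qbinom q (2*m+1 - l) (l+1) * (a*b)^(m-l) * q^(l^2+3*l+2) := by
    intro l hl
    simp only [Finset.mem_range] at hl
    have e1 : 2*(m+1) - (l+1) = 2*m+1 - l := by omega
    have e3 : m + 1 - (l+1) = m - l := by omega
    have e4 : (l+1)^2 + (l+1) = l^2+3*l+2 := by ring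
    rw [e1, e3, e4]
  rw [Finset.sum_congr rfl h2, Finset.mul_sum]
  have h3 : ∀ l ∈ Finset.range (m+1),
      q^(2*m+3) * (qbinom q (2*m+1 - l) l * (a*b)^(m-l) * q^(l^2+l))
      = qbinom q (2*m+1 - l) l * (a*b)^(m-l) * q^(l^2+l+(2*m+3)) := by
    intro l hl
    rw [pow_add]
    ring
  rw [Finset.sum_congr rfl h3]
  have e6 : qbinom q (2*(m+1)+1 - 0) 0 = 1 := rfl
  have e7 : qbinom q (2*(m+1) - 0) 0 = 1 := rfl
  rw [e6, e7]
  ring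

lemma biFhat_eq (a b q : R) : ∀ m : ℕ,
    biFhat a b q (2*m+2) = Se a b q m ∧ biFhat a b q (2*m+3) = b * So a b q m := by
  intro m
  induction m with
  | zero =>
    constructor
    · show (if 2 % 2 = 0 then a else b) * biFhat a b q 1 + q ^ 0 * biFhat a b q 0 = _
      simp [biFhat, Se, qbinom]
    · show (if 3 % 2 = 0 then a else b) * biFhat a b q 2 + q ^ 1 * biFhat a b q 1 = _
      have : biFhat a b q 2 = (if 2 % 2 = 0 then a else b) * biFhat a b q 1 + q ^ 0 * biFhat a b q 0 := rfl
      simp [this, biFhat, So, qbinom]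
  | succ m ih =>
    obtain ⟨ih1, ih2⟩ := ih
    have key1 : biFhat a b q (2*(m+1)+2) = a * biFhat a b q (2*m+3) + q^(2*m+2) * biFhat a b q (2*m+2) := by
      have e : 2*(m+1)+2 = (2*m+2) + 2 := by omega
      rw [e]
      show (if (2*m+2+2) % 2 = 0 then a else b) * _ + _ = _
      have : (2*m+2+2) % 2 = 0 := by omega
      rw [if_pos this]
    constructor
    · rw [key1, ih2, ih1, Se_succ]
      ring
    · have key2 : biFhat a b q (2*(m+1)+3) = b * biFhat a b q (2*(m+1)+2) + q^(2*m+3) * biFhat a b q (2*m+3) := by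
        have e : 2*(m+1)+3 = (2*m+3) + 2 := by omega
        rw [e]
        show (if (2*m+3+2) % 2 = 0 then a else b) * _ + _ = _
        have : (2*m+3+2) % 2 ≠ 0 := by omega
        rw [if_neg this]
        congr 1
      rw [key2, key1, ih2, ih1, So_succ, Se_succ]
      ring

theorem stmt2 (a b q : R) (n : ℕ) (hn : 1 ≤ n) :
    biFhat a b q n = b ^ (n % 2) *
      ∑ l ∈ Finset.range (n / 2),
        qbinom q (n - l - 2) l * (a * b) ^ ((n - 2) / 2 - l) * q ^ (l ^ 2 + l) := by
  rcases n with _ | _ | n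
  · omega
  · simp [biFhat]
  · rcases Nat.even_or_odd n with ⟨m, hm⟩ | ⟨m, hm⟩
    · subst hm
      have h := (biFhat_eq a b q m).1
      have e : m + m + 1 + 1 = 2*m+2 := by omega
      rw [e, h]
      have e2 : (2*m+2) % 2 = 0 := by omega
      rw [e2, pow_zero, one_mul]
      unfold Se
      have e3 : (2*m+2)/2 = m+1 := by omega
      rw [e3]
      apply Finset.sum_congr rfl
      intro l hl
      simp only [Finset.mem_range] at hl
      have e4 : 2*m+2 - l - 2 = 2*m - l := by omega
      have e5 : (2*m+2-2)/2 - l = m - l := by omega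
      rw [e4, e5]
    · subst hm
      have h := (biFhat_eq a b q m).2
      have e : 2*m + 1 + 1 + 1 = 2*m+3 := by omega
      rw [e, h]
      have e2 : (2*m+3) % 2 = 1 := by omega
      rw [e2, pow_one]
      unfold So
      have e3 : (2*m+3)/2 = m+1 := by omega
      rw [e3]
      congr 1
      apply Finset.sum_congr rfl
      intro l hl
      simp only [Finset.mem_range] at hl
      have e4 : 2*m+3 - l - 2 = 2*m+1 - l := by omega
      have e5 : (2*m+3-2)/2 - l = m - l := by omega
      rw [e4, e5]
end

section
/- Let η be the operator on formal power series defined by (η f)(x) = f(qx). Then for all n ≥ 0, (bx + x²η)^n applied to x equals x^{n+1} · Σ_{j=0}^{n} b^{n−j} · x^j · q^{j²} · qbinom(n, j). -/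
open Finset PowerSeries

variable {R : Type*} [CommRing R]

/-!
Write `(bx + x²η)ⁿ x = xⁿ⁺¹ Pₙ`. Since `η (xᵐ φ) = qᵐ xᵐ η φ`, one more application of the
operator gives `Pₙ₊₁ = b Pₙ + qⁿ⁺¹ x η Pₙ`; on coefficients this is the q-Pascal recurrence
satisfied by `bⁿ⁻ʲ q^(j²) [n, j]`.
-/

lemma qbinom_zero_right (q : R) (n : ℕ) : qbinom q n 0 = 1 := by
  cases n <;> rfl

lemma qbinom_succ_succ (q : R) (n k : ℕ) :
    qbinom q (n + 1) (k + 1) = qbinom q n k * q ^ (n - k) + qbinom q n (k + 1) :=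
  rfl

lemma qbinom_eq_zero_of_lt (q : R) : ∀ {n k : ℕ}, n < k → qbinom q n k = 0
  | 0, _ + 1, _ => rfl
  | n + 1, k + 1, h => by
    rw [qbinom_succ_succ, qbinom_eq_zero_of_lt q (by omega : n < k),
      qbinom_eq_zero_of_lt q (by omega : n < k + 1)]
    ring

/-- The `j`-th coefficient of `(bx + x²η)ⁿ x / xⁿ⁺¹`. -/
def iterCoeff (b q : R) (n j : ℕ) : R :=
  b ^ (n - j) * q ^ (j ^ 2) * qbinom q n j

lemma iterCoeff_eq_zero_of_lt (b q : R) {n j : ℕ} (h : n < j) : iterCoeff b q n j = 0 := by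
  rw [iterCoeff, qbinom_eq_zero_of_lt q h, mul_zero]

lemma iterCoeff_succ_zero (b q : R) (n : ℕ) :
    iterCoeff b q (n + 1) 0 = b * iterCoeff b q n 0 := by
  simp only [iterCoeff, qbinom_zero_right, Nat.sub_zero, pow_succ']
  ring

lemma iterCoeff_succ_succ (b q : R) (n j : ℕ) :
    iterCoeff b q (n + 1) (j + 1) =
      b * iterCoeff b q n (j + 1) + q ^ (n + 1) * q ^ j * iterCoeff b q n j := by
  rcases lt_trichotomy j n with hjn | rfl | hnj
  · have hb : b ^ (n - j) = b * b ^ (n - (j + 1)) := by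
      rw [← pow_succ']; congr 1; omega
    have hq : q ^ (n + 1) * q ^ j * q ^ (j ^ 2) = q ^ ((j + 1) ^ 2) * q ^ (n - j) := by
      simp only [← pow_add]; congr 1
      have : (j + 1) ^ 2 = j ^ 2 + 2 * j + 1 := by ring
      omega
    simp only [iterCoeff, qbinom_succ_succ, Nat.add_sub_add_right, hb]
    linear_combination -(b * b ^ (n - (j + 1)) * qbinom q n j) * hq
  · have hq : q ^ (j + 1) * q ^ j * q ^ (j ^ 2) = q ^ ((j + 1) ^ 2) := by
      simp only [← pow_add]; congr 1; ring
    simp only [iterCoeff, qbinom_succ_succ, qbinom_eq_zero_of_lt q (Nat.lt_succ_self j),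
      Nat.sub_self]
    linear_combination qbinom q j j * hq
  · rw [iterCoeff_eq_zero_of_lt b q hnj, iterCoeff_eq_zero_of_lt b q (by omega : n < j + 1),
      iterCoeff_eq_zero_of_lt b q (by omega : n + 1 < j + 1)]
    ring

lemma sum_range_C_mul_X_pow_eq_mk (f : ℕ → R) (n : ℕ) (hf : ∀ j, n < j → f j = 0) :
    ∑ j ∈ range (n + 1), C (f j) * X ^ j = PowerSeries.mk f := by
  ext k
  simp only [map_sum, coeff_C_mul_X_pow, sum_ite_eq, mem_range, coeff_mk]
  split_ifs with hk
  · rfl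
  · exact (hf k (by omega)).symm

lemma C_mul_X_mul_add_X_sq_mul_rescale (b q : R) (m : ℕ) (φ : R⟦X⟧) :
    C b * X * (X ^ m * φ) + X ^ 2 * rescale q (X ^ m * φ) =
      X ^ (m + 1) * (C b * φ + C (q ^ m) * X * rescale q φ) := by
  rw [map_mul, map_pow, rescale_X, mul_pow, map_pow]
  ring

lemma C_mul_mk_iterCoeff_add (b q : R) (n : ℕ) :
    C b * PowerSeries.mk (iterCoeff b q n)
        + C (q ^ (n + 1)) * X * rescale q (PowerSeries.mk (iterCoeff b q n)) =
      PowerSeries.mk (iterCoeff b q (n + 1)) := by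
  ext k
  cases k with
  | zero => simp [iterCoeff_succ_zero]
  | succ j =>
    simp only [map_add, coeff_C_mul, mul_assoc, coeff_succ_X_mul, coeff_rescale, coeff_mk,
      iterCoeff_succ_succ]

lemma sum_range_C_iterCoeff_mul_X_pow (b q : R) (n : ℕ) :
    ∑ j ∈ range (n + 1), C (b ^ (n - j) * q ^ (j ^ 2) * qbinom q n j) * X ^ j =
      PowerSeries.mk (iterCoeff b q n) :=
  sum_range_C_mul_X_pow_eq_mk _ n fun _ => iterCoeff_eq_zero_of_lt b q

theorem stmt8 (b q : R) (n : ℕ) :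
    (fun f : R⟦X⟧ => PowerSeries.C b * PowerSeries.X * f
        + PowerSeries.X ^ 2 * PowerSeries.rescale q f)^[n] PowerSeries.X =
      PowerSeries.X ^ (n + 1) *
        ∑ j ∈ Finset.range (n + 1),
          PowerSeries.C (b ^ (n - j) * q ^ (j ^ 2) * qbinom q n j) * PowerSeries.X ^ j := by
  rw [sum_range_C_iterCoeff_mul_X_pow]
  induction n with
  | zero =>
    rw [← sum_range_C_iterCoeff_mul_X_pow]
    simp [qbinom_zero_right]
  | succ n ih =>
    rw [Function.iterate_succ_apply', ih, C_mul_X_mul_add_X_sq_mul_rescale,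
      C_mul_mk_iterCoeff_add]
end
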